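/- Let g ≥ 2 and let ψ : ⋀⁴H → ⋀⁴H be the unique ℚ-linear map with ψ(x₁∧x₂∧x₃∧x₄) = (x₁∧x₂ − (⟨x₁,x₂⟩/g)θ)∧(x₃∧x₄ − (⟨x₃,x₄⟩/g)θ) − (x₁∧x₃ − (⟨x₁,x₃⟩/g)θ)∧(x₂∧x₄ − (⟨x₂,x₄⟩/g)θ) + (x₁∧x₄ − (⟨x₁,x₄⟩/g)θ)∧(x₂∧x₃ − (⟨x₂,x₃⟩/g)θ) for all x₁,…,x₄ ∈ H. Then for every j with 1 ≤ j ≤ g, the following identity holds in ⋀⁴H: (a_j∧b_j − θ/g)∧(a_j∧b_j − θ/g) + ψ( (1/(g+1))·a_j∧b_j∧θ − (1/((g+1)(2g+1)))·θ∧θ ) = 0. (This identity is the content of the corollary computing the projection of (a_j∧b_j − θ/g)² ∈ S²Λ²₀H onto the isotypical component of highest weight 2λ₂.) -/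
import Mathlib


noncomputable section

/-- `H = ℚ^{2g}`, where `Sum.inl i` indexes the basis vector `aᵢ` and `Sum.inr i`
indexes the basis vector `bᵢ`. -/
abbrev H (g : ℕ) : Type := (Fin g ⊕ Fin g) → ℚ

/-- The basis vector `aᵢ` of `H`. -/
def aa (g : ℕ) (i : Fin g) : H g := Pi.single (Sum.inl i) 1

/-- The basis vector `bᵢ` of `H`. -/
def bb (g : ℕ) (i : Fin g) : H g := Pi.single (Sum.inr i) 1

/-- The standard symplectic form on `H`, with `⟨aᵢ,aⱼ⟩ = ⟨bᵢ,bⱼ⟩ = 0` and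
`⟨aᵢ,bⱼ⟩ = δᵢⱼ = -⟨bⱼ,aᵢ⟩`. -/
def symp (g : ℕ) (x y : H g) : ℚ :=
  ∑ i : Fin g, (x (Sum.inl i) * y (Sum.inr i) - x (Sum.inr i) * y (Sum.inl i))

/-- The canonical inclusion `H → ⋀H` into the exterior algebra. -/
abbrev ιE (g : ℕ) : H g →ₗ[ℚ] ExteriorAlgebra ℚ (H g) := ExteriorAlgebra.ι ℚ

/-- `θ = Σᵢ aᵢ ∧ bᵢ ∈ ⋀²H`. -/
def θE (g : ℕ) : ExteriorAlgebra ℚ (H g) :=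
  ∑ i : Fin g, ιE g (aa g i) * ιE g (bb g i)

/-- The projection `u ∧ v ↦ u ∧ v − (⟨u,v⟩/g)·θ` of a decomposable `2`-vector onto the
primitive part `Λ²₀H`. -/
def prim (g : ℕ) (u v : H g) : ExteriorAlgebra ℚ (H g) :=
  ιE g u * ιE g v - (symp g u v / (g : ℚ)) • θE g

lemma symp_aa_aa (g : ℕ) (i k : Fin g) : symp g (aa g i) (aa g k) = 0 := by
  simp [symp, aa, Pi.single_apply]
lemma symp_bb_bb (g : ℕ) (i k : Fin g) : symp g (bb g i) (bb g k) = 0 := by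
  simp [symp, bb, Pi.single_apply]
lemma symp_aa_bb (g : ℕ) (i k : Fin g) :
    symp g (aa g i) (bb g k) = if i = k then 1 else 0 := by
  simp [symp, aa, bb, Pi.single_apply, eq_comm]
lemma symp_bb_aa (g : ℕ) (i k : Fin g) :
    symp g (bb g i) (aa g k) = -(if i = k then 1 else 0) := by
  simp [symp, aa, bb, Pi.single_apply, eq_comm]

lemma ι_anticomm (g : ℕ) (u v : H g) : ιE g u * ιE g v = -(ιE g v * ιE g u) := by
  rw [eq_neg_iff_add_eq_zero]
  exact ExteriorAlgebra.ι_add_mul_swap u v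

lemma swap12 (g : ℕ) (x y z w : H g) :
    ιE g x * ιE g y * ιE g z * ιE g w = -(ιE g y * ιE g x * ιE g z * ιE g w) := by
  rw [ι_anticomm g x y]; noncomm_ring

lemma swap23 (g : ℕ) (x y z w : H g) :
    ιE g x * ιE g y * ιE g z * ιE g w = -(ιE g x * ιE g z * ιE g y * ιE g w) := by
  rw [mul_assoc (ιE g x) (ιE g y), ι_anticomm g y z]; noncomm_ring

lemma swap34 (g : ℕ) (x y z w : H g) :
    ιE g x * ιE g y * ιE g z * ιE g w = -(ιE g x * ιE g y * ιE g w * ιE g z) := by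
  rw [mul_assoc (ιE g x * ιE g y), ι_anticomm g z w]; noncomm_ring

lemma comm2 (g : ℕ) (x y z w : H g) :
    (ιE g x * ιE g y) * (ιE g z * ιE g w) = (ιE g z * ιE g w) * (ιE g x * ιE g y) := by
  rw [← mul_assoc, ← mul_assoc, swap23 g x y z w, swap12 g x z y w, swap34 g z x y w,
    swap23 g z x w y, neg_neg, neg_neg]

def pE (g : ℕ) (i : Fin g) : ExteriorAlgebra ℚ (H g) := ιE g (aa g i) * ιE g (bb g i)

lemma θE_eq (g : ℕ) : θE g = ∑ i, pE g i := rfl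

lemma pp_self (g : ℕ) (j : Fin g) : pE g j * pE g j = 0 := by
  show (ιE g (aa g j) * ιE g (bb g j)) * (ιE g (aa g j) * ιE g (bb g j)) = 0
  rw [← mul_assoc, swap23 g (aa g j) (bb g j) (aa g j) (bb g j)]
  rw [show ιE g (aa g j) * ιE g (aa g j) = 0 from ExteriorAlgebra.ι_sq_zero _]
  simp

lemma θ_comm_p (g : ℕ) (j : Fin g) : θE g * pE g j = pE g j * θE g := by
  rw [θE_eq, Finset.sum_mul, Finset.mul_sum]
  exact Finset.sum_congr rfl fun i _ => comm2 g (aa g i) (bb g i) (aa g j) (bb g j)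

def PE (g : ℕ) (i : Fin g) : ExteriorAlgebra ℚ (H g) := prim g (aa g i) (bb g i)

lemma PE_eq (g : ℕ) (i : Fin g) : PE g i = pE g i - (1 / (g : ℚ)) • θE g := by
  simp [PE, prim, pE, symp_aa_bb, one_div]

lemma prim_aa (g : ℕ) (i k : Fin g) :
    prim g (aa g i) (aa g k) = ιE g (aa g i) * ιE g (aa g k) := by
  simp [prim, symp_aa_aa]

lemma prim_bb (g : ℕ) (i k : Fin g) :
    prim g (bb g i) (bb g k) = ιE g (bb g i) * ιE g (bb g k) := by
  simp [prim, symp_bb_bb]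

lemma prim_ab_ne (g : ℕ) {i k : Fin g} (h : i ≠ k) :
    prim g (aa g i) (bb g k) = ιE g (aa g i) * ιE g (bb g k) := by
  simp [prim, symp_aa_bb, h]

lemma prim_ba_ne (g : ℕ) {i k : Fin g} (h : i ≠ k) :
    prim g (bb g i) (aa g k) = ιE g (bb g i) * ιE g (aa g k) := by
  simp [prim, symp_bb_aa, h]

lemma hterm (g : ℕ) (ψ : ExteriorAlgebra ℚ (H g) →ₗ[ℚ] ExteriorAlgebra ℚ (H g))
    (hψ : ∀ x₁ x₂ x₃ x₄ : H g,
      ψ (ιE g x₁ * ιE g x₂ * ιE g x₃ * ιE g x₄) =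
        prim g x₁ x₂ * prim g x₃ x₄ - prim g x₁ x₃ * prim g x₂ x₄
          + prim g x₁ x₄ * prim g x₂ x₃) (j i : Fin g) :
    ψ (pE g j * pE g i) =
      PE g j * PE g i + (2 : ℚ) • (pE g j * pE g i) -
        (if i = j then PE g j * PE g j else 0) := by
  by_cases h : i = j
  · subst h
    rw [pp_self, map_zero]
    simp
  · have key := hψ (aa g j) (bb g j) (aa g i) (bb g i)
    have harg : ιE g (aa g j) * ιE g (bb g j) * ιE g (aa g i) * ιE g (bb g i)
        = pE g j * pE g i := by
      rw [pE, pE, ← mul_assoc]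
    rw [harg] at key
    rw [key]
    have hne : j ≠ i := fun hh => h hh.symm
    rw [prim_aa, prim_bb, prim_ab_ne g hne, prim_ba_ne g hne]
    have h2 : (ιE g (aa g j) * ιE g (aa g i)) * (ιE g (bb g j) * ιE g (bb g i))
        = -(pE g j * pE g i) := by
      rw [← mul_assoc, swap23 g (aa g j) (aa g i) (bb g j) (bb g i), pE, pE, mul_assoc]
    have h3 : (ιE g (aa g j) * ιE g (bb g i)) * (ιE g (bb g j) * ιE g (aa g i))
        = pE g j * pE g i := by
      rw [← mul_assoc, swap23 g (aa g j) (bb g i) (bb g j) (aa g i),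
        swap34 g (aa g j) (bb g j) (bb g i) (aa g i), neg_neg, pE, pE, mul_assoc]
    rw [h2, h3, if_neg h]
    show PE g j * PE g i - -(pE g j * pE g i) + pE g j * pE g i = _
    module

lemma sumPE (g : ℕ) (hg : (g : ℚ) ≠ 0) : ∑ i, PE g i = 0 := by
  simp only [PE_eq]
  rw [Finset.sum_sub_distrib, Finset.sum_const, Finset.card_univ, Fintype.card_fin,
    ← Nat.cast_smul_eq_nsmul ℚ, smul_smul, ← θE_eq]
  rw [show (g : ℚ) * (1 / (g : ℚ)) = 1 by field_simp]
  rw [one_smul, sub_self]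

lemma hψpθ (g : ℕ) (hg : (g : ℚ) ≠ 0)
    (ψ : ExteriorAlgebra ℚ (H g) →ₗ[ℚ] ExteriorAlgebra ℚ (H g))
    (hψ : ∀ x₁ x₂ x₃ x₄ : H g,
      ψ (ιE g x₁ * ιE g x₂ * ιE g x₃ * ιE g x₄) =
        prim g x₁ x₂ * prim g x₃ x₄ - prim g x₁ x₃ * prim g x₂ x₄
          + prim g x₁ x₄ * prim g x₂ x₃) (j : Fin g) :
    ψ (pE g j * θE g) = (2 : ℚ) • (pE g j * θE g) - PE g j * PE g j := by
  rw [θE_eq, Finset.mul_sum, map_sum]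
  simp only [hterm g ψ hψ j]
  rw [Finset.sum_sub_distrib, Finset.sum_add_distrib, ← Finset.mul_sum, sumPE g hg,
    ← Finset.smul_sum, ← Finset.mul_sum, Finset.sum_ite_eq' Finset.univ j
      (fun _ => PE g j * PE g j), if_pos (Finset.mem_univ j), mul_zero, zero_add]

lemma hPsq (g : ℕ) (j : Fin g) :
    PE g j * PE g j = (-(2 / (g : ℚ))) • (pE g j * θE g) +
      ((1 / (g : ℚ)) * (1 / (g : ℚ))) • (θE g * θE g) := by
  rw [PE_eq]
  simp only [sub_mul, mul_sub, smul_mul_assoc, mul_smul_comm, pp_self, θ_comm_p]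
  module

lemma hψθθ (g : ℕ) (hg : (g : ℚ) ≠ 0)
    (ψ : ExteriorAlgebra ℚ (H g) →ₗ[ℚ] ExteriorAlgebra ℚ (H g))
    (hψ : ∀ x₁ x₂ x₃ x₄ : H g,
      ψ (ιE g x₁ * ιE g x₂ * ιE g x₃ * ιE g x₄) =
        prim g x₁ x₂ * prim g x₃ x₄ - prim g x₁ x₃ * prim g x₂ x₄
          + prim g x₁ x₄ * prim g x₂ x₃) :
    ψ (θE g * θE g) = (2 + 1 / (g : ℚ)) • (θE g * θE g) := by
  nth_rewrite 1 [θE_eq]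
  rw [Finset.sum_mul, map_sum]
  simp only [hψpθ g hg ψ hψ, hPsq g]
  rw [Finset.sum_sub_distrib, Finset.sum_add_distrib, ← Finset.smul_sum, ← Finset.smul_sum,
    ← Finset.sum_mul, ← θE_eq, Finset.sum_const, Finset.card_univ, Fintype.card_fin,
    ← Nat.cast_smul_eq_nsmul ℚ, smul_smul]
  match_scalars
  field_simp
  ring

/-- Let `g ≥ 2` and let `ψ : ⋀⁴H → ⋀⁴H` be the unique linear map with
`ψ(x₁∧x₂∧x₃∧x₄) = p(x₁∧x₂)∧p(x₃∧x₄) − p(x₁∧x₃)∧p(x₂∧x₄) + p(x₁∧x₄)∧p(x₂∧x₃)`,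
where `p(u∧v) = u∧v − (⟨u,v⟩/g)θ`.  Then for every `j`,
`(aⱼ∧bⱼ − θ/g)∧(aⱼ∧bⱼ − θ/g) + ψ((1/(g+1))·aⱼ∧bⱼ∧θ − (1/((g+1)(2g+1)))·θ∧θ) = 0`:
the projection of `(aⱼ∧bⱼ − θ/g)² ∈ S²Λ²₀H` onto the `2λ₂` isotypical component. -/
theorem projection_onto_two_lambda_two_component (g : ℕ) (hg : 2 ≤ g)
    (ψ : ExteriorAlgebra ℚ (H g) →ₗ[ℚ] ExteriorAlgebra ℚ (H g))
    (hψ : ∀ x₁ x₂ x₃ x₄ : H g,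
      ψ (ιE g x₁ * ιE g x₂ * ιE g x₃ * ιE g x₄) =
        prim g x₁ x₂ * prim g x₃ x₄ - prim g x₁ x₃ * prim g x₂ x₄
          + prim g x₁ x₄ * prim g x₂ x₃) :
    ∀ j : Fin g,
      (ιE g (aa g j) * ιE g (bb g j) - (1 / (g : ℚ)) • θE g) *
          (ιE g (aa g j) * ιE g (bb g j) - (1 / (g : ℚ)) • θE g) +
        ψ ((1 / ((g : ℚ) + 1)) • (ιE g (aa g j) * ιE g (bb g j) * θE g) -
            (1 / (((g : ℚ) + 1) * (2 * (g : ℚ) + 1))) • (θE g * θE g)) = 0 := by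
  intro j
  have hgpos : (0 : ℚ) < (g : ℚ) := by
    have : 0 < g := by omega
    exact_mod_cast this
  have hg0 : (g : ℚ) ≠ 0 := ne_of_gt hgpos
  show (pE g j - (1 / (g : ℚ)) • θE g) * (pE g j - (1 / (g : ℚ)) • θE g) +
      ψ ((1 / ((g : ℚ) + 1)) • (pE g j * θE g) -
        (1 / (((g : ℚ) + 1) * (2 * (g : ℚ) + 1))) • (θE g * θE g)) = 0
  rw [← PE_eq g j, map_sub, map_smul, map_smul, hψpθ g hg0 ψ hψ j, hψθθ g hg0 ψ hψ,
    hPsq g j]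
  have hg1 : (g : ℚ) + 1 ≠ 0 := by positivity
  have hg2 : 2 * (g : ℚ) + 1 ≠ 0 := by positivity
  match_scalars <;> (field_simp; ring)
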